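/- Let K ∈ End*_𝒜(H) and let {Λᵢ}_{i∈I} be a ∗-K-g-frame for H with bounds A, B ∈ 𝒜. If U ∈ End*_𝒜(H) is a co-isometry (i.e., UU* = id_H) satisfying KU = UK, then {Λᵢ ∘ U*}_{i∈I} is a ∗-K-g-frame for H with the same bounds A and B. -/

import Mathlib

open scoped RightActions

/-- The Hilbert C⋆-module class as in the older Mathlib: a right `A`-module structure
(`SMul Aᵐᵒᵖ E`) with inner product `A`-linear on the right, `inner x (y <• a) = inner x y * a`. -/
class CStarModuleOld (A E : Type*) [NonUnitalSemiring A] [StarRing A] [Module ℂ A]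
    [AddCommGroup E] [Module ℂ E] [PartialOrder A] [SMul Aᵐᵒᵖ E] [Norm A] [Norm E]
    extends Inner A E where
  inner_add_right {x} {y} {z} : inner x (y + z) = inner x y + inner x z
  inner_self_nonneg {x} : 0 ≤ inner x x
  inner_self {x} : inner x x = 0 ↔ x = 0
  inner_op_smul_right {a : A} {x y : E} : inner x (y <• a) = inner x y * a
  inner_smul_right_complex {z : ℂ} {x} {y} : inner x (z • y) = z • inner x y
  star_inner x y : star (inner x y) = inner y x
  norm_eq_sqrt_norm_inner_self x : ‖x‖ = √‖inner x x‖

/-!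
Since `U U* = 1`, the adjoint `U*` preserves the `𝓐`-valued inner product:
`⟨U* x, U* x⟩ = ⟨U U* x, x⟩ = ⟨x, x⟩`. Taking adjoints in `K U = U K` gives `K* U* = U* K*`,
hence also `⟨K* U* x, K* U* x⟩ = ⟨K* x, K* x⟩`. The frame inequalities for `{Λ i}` at the
point `U* x` are therefore exactly those for `{Λ i ∘ U*}` at `x`.
-/

namespace CStarModuleOld

variable {A E F : Type*} [NonUnitalRing A] [StarRing A] [Module ℂ A] [PartialOrder A] [Norm A]
  [AddCommGroup E] [Module ℂ E] [SMul Aᵐᵒᵖ E] [Norm E] [CStarModuleOld A E]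
  [AddCommGroup F] [Module ℂ F] [SMul Aᵐᵒᵖ F] [Norm F] [CStarModuleOld A F]

theorem inner_sub_right (x y z : E) : (inner A x (y - z) : A) = inner A x y - inner A x z :=
  eq_sub_of_add_eq <| by rw [← inner_add_right, sub_add_cancel]

theorem ext_inner_left {x y : E} (h : ∀ z : E, (inner A z x : A) = inner A z y) : x = y := by
  rw [← sub_eq_zero, ← inner_self (A := A), inner_sub_right, h, sub_self]

theorem inner_adjoint_adjoint_eq_of_rightInverse {U : F → E} {Uadj : E → F}
    (hU : ∀ x y, (inner A (U x) y : A) = inner A x (Uadj y)) (hUco : ∀ x, U (Uadj x) = x)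
    (x : E) : (inner A (Uadj x) (Uadj x) : A) = inner A x x := by
  rw [← hU, hUco]

theorem adjoint_comp_adjoint_comm {K Kadj U Uadj : E → E}
    (hK : ∀ x y, (inner A (K x) y : A) = inner A x (Kadj y))
    (hU : ∀ x y, (inner A (U x) y : A) = inner A x (Uadj y))
    (hcomm : ∀ x, K (U x) = U (K x)) (x : E) : Kadj (Uadj x) = Uadj (Kadj x) :=
  ext_inner_left (A := A) fun z => by rw [← hK, ← hU, ← hcomm, hK, hU]

end CStarModuleOld

open CStarModuleOld in
theorem star_K_g_frame_comp_coisometry_general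
    {𝓐 : Type*} [CStarAlgebra 𝓐] [PartialOrder 𝓐]
    {I : Type*}
    {H : Type*} [NormedAddCommGroup H] [NormedSpace ℂ H] [SMul 𝓐ᵐᵒᵖ H]
    [CStarModuleOld 𝓐 H]
    {Hi : I → Type*} [∀ i, NormedAddCommGroup (Hi i)] [∀ i, NormedSpace ℂ (Hi i)]
    [∀ i, SMul 𝓐ᵐᵒᵖ (Hi i)] [∀ i, CStarModuleOld 𝓐 (Hi i)]
    -- `K` is an adjointable operator on `H` with adjoint `Kadj`
    (K Kadj : H →L[ℂ] H)
    (hK : ∀ x y : H, (inner 𝓐 (K x) y : 𝓐) = inner 𝓐 x (Kadj y))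
    -- the family `Λ i ∈ End*(H, Hi i)` of adjointable operators
    (Λ : ∀ i, H →L[ℂ] Hi i)
    -- `{Λ i}` is a `∗`-`K`-`g`-frame with bounds `a`, `b`
    (a b : 𝓐)
    (hsum : ∀ x : H, Summable fun i => (inner 𝓐 (Λ i x) (Λ i x) : 𝓐))
    (hlow : ∀ x : H,
      a * (inner 𝓐 (Kadj x) (Kadj x) : 𝓐) * star a ≤ ∑' i, (inner 𝓐 (Λ i x) (Λ i x) : 𝓐))
    (hup : ∀ x : H, ∑' i, (inner 𝓐 (Λ i x) (Λ i x) : 𝓐) ≤ b * (inner 𝓐 x x : 𝓐) * star b)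
    -- `U` is an adjointable co-isometry commuting with `K`
    (U Uadj : H →L[ℂ] H)
    (hU : ∀ x y : H, (inner 𝓐 (U x) y : 𝓐) = inner 𝓐 x (Uadj y))
    (hUco : U.comp Uadj = ContinuousLinearMap.id ℂ H)
    (hcomm : K.comp U = U.comp K) :
    -- `{Λ i ∘ U*}` is a `∗`-`K`-`g`-frame with the same bounds `a`, `b`
    (∀ x : H, Summable fun i => (inner 𝓐 (Λ i (Uadj x)) (Λ i (Uadj x)) : 𝓐)) ∧
    ∀ x : H,
      a * (inner 𝓐 (Kadj x) (Kadj x) : 𝓐) * star a ≤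
          ∑' i, (inner 𝓐 (Λ i (Uadj x)) (Λ i (Uadj x)) : 𝓐) ∧
      ∑' i, (inner 𝓐 (Λ i (Uadj x)) (Λ i (Uadj x)) : 𝓐) ≤ b * (inner 𝓐 x x : 𝓐) * star b := by
  have hUadj : ∀ x, (inner 𝓐 (Uadj x) (Uadj x) : 𝓐) = inner 𝓐 x x :=
    inner_adjoint_adjoint_eq_of_rightInverse hU (DFunLike.congr_fun hUco)
  have hKadj_Uadj : ∀ x, Kadj (Uadj x) = Uadj (Kadj x) :=
    adjoint_comp_adjoint_comm (A := 𝓐) hK hU (DFunLike.congr_fun hcomm)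
  refine ⟨fun x => hsum (Uadj x), fun x => ⟨?_, ?_⟩⟩
  · simpa only [hKadj_Uadj, hUadj] using hlow (Uadj x)
  · simpa only [hUadj] using hup (Uadj x)

/-- If `{Λ i}` is a `∗`-`K`-`g`-frame with bounds `a, b` and `U` is a
co-isometry (`U U* = id`) with `K U = U K`, then `{Λ i ∘ U*}` is a `∗`-`K`-`g`-frame with
the same bounds `a` and `b`. -/
theorem star_K_g_frame_comp_coisometry
    {𝓐 : Type*} [CStarAlgebra 𝓐] [PartialOrder 𝓐] [StarOrderedRing 𝓐]
    {I : Type*} [Countable I]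
    {H : Type*} [NormedAddCommGroup H] [NormedSpace ℂ H] [SMul 𝓐ᵐᵒᵖ H]
    [CStarModuleOld 𝓐 H] [CompleteSpace H]
    {Hi : I → Type*} [∀ i, NormedAddCommGroup (Hi i)] [∀ i, NormedSpace ℂ (Hi i)]
    [∀ i, SMul 𝓐ᵐᵒᵖ (Hi i)] [∀ i, CStarModuleOld 𝓐 (Hi i)] [∀ i, CompleteSpace (Hi i)]
    -- `K` is an adjointable operator on `H` with adjoint `Kadj`
    (K Kadj : H →L[ℂ] H)
    (hK : ∀ x y : H, (inner 𝓐 (K x) y : 𝓐) = inner 𝓐 x (Kadj y))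
    -- the family `Λ i ∈ End*(H, Hi i)` of adjointable operators
    (Λ : ∀ i, H →L[ℂ] Hi i) (Λadj : ∀ i, Hi i →L[ℂ] H)
    (hΛ : ∀ i (x : H) (y : Hi i), (inner 𝓐 (Λ i x) y : 𝓐) = inner 𝓐 x (Λadj i y))
    -- `{Λ i}` is a `∗`-`K`-`g`-frame with bounds `a`, `b`
    (a b : 𝓐) (ha : a ≠ 0) (hb : b ≠ 0)
    (hsum : ∀ x : H, Summable fun i => (inner 𝓐 (Λ i x) (Λ i x) : 𝓐))
    (hlow : ∀ x : H,
      a * (inner 𝓐 (Kadj x) (Kadj x) : 𝓐) * star a ≤ ∑' i, (inner 𝓐 (Λ i x) (Λ i x) : 𝓐))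
    (hup : ∀ x : H, ∑' i, (inner 𝓐 (Λ i x) (Λ i x) : 𝓐) ≤ b * (inner 𝓐 x x : 𝓐) * star b)
    -- `U` is an adjointable co-isometry commuting with `K`
    (U Uadj : H →L[ℂ] H)
    (hU : ∀ x y : H, (inner 𝓐 (U x) y : 𝓐) = inner 𝓐 x (Uadj y))
    (hUco : U.comp Uadj = ContinuousLinearMap.id ℂ H)
    (hcomm : K.comp U = U.comp K) :
    -- `{Λ i ∘ U*}` is a `∗`-`K`-`g`-frame with the same bounds `a`, `b`
    (∀ x : H, Summable fun i => (inner 𝓐 (Λ i (Uadj x)) (Λ i (Uadj x)) : 𝓐)) ∧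
    ∀ x : H,
      a * (inner 𝓐 (Kadj x) (Kadj x) : 𝓐) * star a ≤
          ∑' i, (inner 𝓐 (Λ i (Uadj x)) (Λ i (Uadj x)) : 𝓐) ∧
      ∑' i, (inner 𝓐 (Λ i (Uadj x)) (Λ i (Uadj x)) : 𝓐) ≤ b * (inner 𝓐 x x : 𝓐) * star b :=
  star_K_g_frame_comp_coisometry_general K Kadj hK Λ a b hsum hlow hup U Uadj hU hUco hcomm
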